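/- arXiv:1712.08477 — 2 statements merged into one kernel-verified Lean document; each statement's English description precedes it below -/
import Mathlib

section
/- Let K, L ∈ ℕ and let β > 0. Suppose the multiindex i ∈ {1,…,N₁}^K (or j ∈ {1,…,N₂}^L) contains an index that occurs more than once, i.e. its profile vector r satisfies r_m > 0 for some m > 1. Then, as N → ∞ with N₁ → ∞ and N₂ → ∞, the quantity (1/(N₁^K N₂^L)) · w_K(r) · w_L(s) · E(X_{i₁}⋯X_{i_K} Y_{j₁}⋯Y_{j_L}) converges to 0, where s is the profile vector of j and the expectation is taken under the Curie–Weiss measure. -/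
open MeasureTheory Filter Topology Finset

noncomputable section

/-- The spin value (±1) associated with a Boolean. -/
def spin (b : Bool) : ℝ := if b then 1 else -1

/-- The unnormalized Curie–Weiss weight of a spin configuration:
`exp((β/(2N)) (∑ xⱼ)²)`. -/
def cwWeight (β : ℝ) (N : ℕ) (x : Fin N → Bool) : ℝ :=
  Real.exp (β / (2 * N) * (∑ j, spin (x j)) ^ 2)

/-- Expectation with respect to the Curie–Weiss measure with inverse temperature `β`. -/
def cwExp (β : ℝ) (N : ℕ) (f : (Fin N → Bool) → ℝ) : ℝ :=
  (∑ x, cwWeight β N x * f x) / ∑ x, cwWeight β N x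

/-- The spin of the `j`-th particle (`j` given as a natural number). -/
def spinAt {N : ℕ} (x : Fin N → Bool) (j : ℕ) : ℝ :=
  if h : j < N then spin (x ⟨j, h⟩) else 0

/-- The multiplicity `ν_j(i)` of the index `j` in the multiindex `i`. -/
def nuNat {K : ℕ} (i : Fin K → ℕ) (j : ℕ) : ℕ :=
  (Finset.univ.filter fun k => i k = j).card

/-- `i` is a multiindex over the index set `A` with profile vector `r`, i.e. all entries
of `i` lie in `A` and for each `m ∈ {1, …, K}` exactly `r m` elements of `A` occur
exactly `m` times in `i`. -/
def HasProfileOn (A : Finset ℕ) {K : ℕ} (i : Fin K → ℕ) (r : ℕ → ℕ) : Prop :=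
  (∀ k, i k ∈ A) ∧ ∀ m ∈ Finset.Icc 1 K, (A.filter fun j => nuNat i j = m).card = r m

/-- `w_K(r)`: the number of multiindices of length `K` over the index set `A`
with profile vector `r`. -/
def wcount (A : Finset ℕ) (K : ℕ) (r : ℕ → ℕ) : ℕ :=
  Nat.card {i : Fin K → ℕ // HasProfileOn A i r}

lemma abs_spinAt_le {N : ℕ} (x : Fin N → Bool) (j : ℕ) : |spinAt x j| ≤ 1 := by
  unfold spinAt spin
  split_ifs <;> norm_num

lemma abs_cwExp_le_one (β : ℝ) (N : ℕ) (f : (Fin N → Bool) → ℝ)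
    (hf : ∀ x, |f x| ≤ 1) : |cwExp β N f| ≤ 1 := by
  have hS : 0 < ∑ x, cwWeight β N x :=
    Finset.sum_pos (fun x _ => Real.exp_pos _) Finset.univ_nonempty
  rw [cwExp, abs_div, abs_of_pos hS, div_le_one hS]
  calc |∑ x, cwWeight β N x * f x| ≤ ∑ x, |cwWeight β N x * f x| :=
        Finset.abs_sum_le_sum_abs _ _
    _ ≤ ∑ x, cwWeight β N x := by
        refine Finset.sum_le_sum fun x _ => ?_
        have hw : 0 < cwWeight β N x := Real.exp_pos _
        rw [abs_mul, abs_of_pos hw]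
        exact mul_le_of_le_one_right hw.le (hf x)

lemma wcount_le (A : Finset ℕ) (K : ℕ) (r : ℕ → ℕ) : wcount A K r ≤ A.card ^ K := by
  have h : Function.Injective
      (fun p : {i : Fin K → ℕ // HasProfileOn A i r} => fun k => (⟨p.1 k, p.2.1 k⟩ : {n // n ∈ A})) := by
    intro p q h
    apply Subtype.ext
    funext k
    exact congrArg Subtype.val (congrFun h k)
  calc wcount A K r ≤ Nat.card (Fin K → {n // n ∈ A}) :=
        Nat.card_le_card_of_injective _ h
    _ = A.card ^ K := by
        simp [Nat.card_eq_fintype_card, Fintype.card_fun]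

set_option synthInstance.maxHeartbeats 800000 in
lemma wcount_le_rep (A : Finset ℕ) (K : ℕ) (r : ℕ → ℕ)
    (h : ∃ m ∈ Finset.Icc 2 (K + 1), 0 < r m) :
    wcount A (K + 1) r ≤ (K + 1) ^ 2 * A.card ^ K := by
  classical
  obtain ⟨m, hm, hrm⟩ := h
  rw [Finset.mem_Icc] at hm
  have key : ∀ p : {i : Fin (K+1) → ℕ // HasProfileOn A i r},
      ∃ k k' : Fin (K+1), k ≠ k' ∧ p.1 k = p.1 k' := by
    rintro ⟨i, h1, h2⟩
    have hc := h2 m (Finset.mem_Icc.mpr ⟨by omega, hm.2⟩)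
    have hpos : 0 < (A.filter fun j => nuNat i j = m).card := hc ▸ hrm
    obtain ⟨j, hj⟩ := Finset.card_pos.mp hpos
    have hj2 : nuNat i j = m := (Finset.mem_filter.mp hj).2
    have h2' : 1 < (Finset.univ.filter fun k => i k = j).card := by
      rw [nuNat] at hj2; omega
    obtain ⟨k, hk, k', hk', hkk'⟩ := Finset.one_lt_card.mp h2'
    exact ⟨k, k', hkk', by
      show i k = i k'
      rw [(Finset.mem_filter.mp hk).2, (Finset.mem_filter.mp hk').2]⟩
  set F : {i : Fin (K+1) → ℕ // HasProfileOn A i r} →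
      Fin (K+1) × Fin (K+1) × (Fin K → {n // n ∈ A}) := fun p =>
    ⟨(key p).choose, (key p).choose_spec.choose,
     fun t => ⟨p.1 ((key p).choose_spec.choose.succAbove t),
       p.2.1 _⟩⟩ with hF
  have hinj : Function.Injective F := by
    intro p q h
    have hfst := congrArg Prod.fst h
    have hfst2 := congrArg (fun z => z.2.1) h
    have hsnd2 := congrArg (fun z => z.2.2) h
    simp only [hF] at hfst hfst2 hsnd2
    have hp := (key p).choose_spec.choose_spec
    have hq := (key q).choose_spec.choose_spec
    set kp := (key p).choose
    set kp' := (key p).choose_spec.choose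
    set kq := (key q).choose
    set kq' := (key q).choose_spec.choose
    have hvals : ∀ t, p.1 (kp'.succAbove t) = q.1 (kq'.succAbove t) := by
      intro t
      exact congrArg Subtype.val (congrFun hsnd2 t)
    have hoff : ∀ x : Fin (K+1), x ≠ kp' → p.1 x = q.1 x := by
      intro x hx
      obtain ⟨t, ht⟩ := Fin.exists_succAbove_eq hx
      have := hvals t
      rw [ht] at this
      rw [← hfst2, ht] at this
      exact this
    apply Subtype.ext
    funext x
    by_cases hx : x = kp'
    · subst hx
      have e1 : p.1 kp' = p.1 kp := hp.2.symm
      have e2 : p.1 kp = q.1 kp := hoff kp hp.1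
      have e3 : q.1 kp = q.1 kq' := by
        rw [hfst]; exact hq.2
      rw [e1, e2, e3, ← hfst2]
    · exact hoff x hx
  calc wcount A (K+1) r
      ≤ Nat.card (Fin (K+1) × Fin (K+1) × (Fin K → {n // n ∈ A})) :=
        Nat.card_le_card_of_injective F hinj
    _ = (K + 1) ^ 2 * A.card ^ K := by
        simp [Nat.card_eq_fintype_card, Fintype.card_fun]
        ring

/-- If the profile vector `r` of the multiindex `i ∈ {1,…,N₁}^K` (or the profile `s` of
`j ∈ {N₁+1,…,N₁+N₂}^L`) has a repeated index, i.e. `r_m > 0` for some `m ≥ 2`, then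
`(1/(N₁^K N₂^L)) w_K(r) w_L(s) E(X_{i₁}⋯X_{i_K} Y_{j₁}⋯Y_{j_L}) → 0` as `N → ∞`. -/
theorem repeated_index_term_vanishes
    (β : ℝ) (hβ : 0 < β) (K L : ℕ)
    (N1 N2 : ℕ → ℕ) (hle : ∀ N, N1 N + N2 N ≤ N)
    (hN1 : Tendsto N1 atTop atTop) (hN2 : Tendsto N2 atTop atTop)
    (r s : ℕ → ℕ)
    (hr : ∑ m ∈ Finset.Icc 1 K, m * r m = K)
    (hs : ∑ m ∈ Finset.Icc 1 L, m * s m = L)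
    (hrep : (∃ m ∈ Finset.Icc 2 K, 0 < r m) ∨ (∃ m ∈ Finset.Icc 2 L, 0 < s m))
    (i : (N : ℕ) → Fin K → ℕ) (j : (N : ℕ) → Fin L → ℕ)
    (hi : ∀ᶠ N in atTop, HasProfileOn (Finset.range (N1 N)) (i N) r)
    (hj : ∀ᶠ N in atTop, HasProfileOn (Finset.Ico (N1 N) (N1 N + N2 N)) (j N) s) :
    Tendsto (fun N =>
        (1 / ((N1 N : ℝ) ^ K * (N2 N : ℝ) ^ L)) *
          (wcount (Finset.range (N1 N)) K r : ℝ) *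
          (wcount (Finset.Ico (N1 N) (N1 N + N2 N)) L s : ℝ) *
          cwExp β N (fun x => (∏ k, spinAt x (i N k)) * ∏ l, spinAt x (j N l)))
      atTop (𝓝 0) := by
  have hE : ∀ N, |cwExp β N (fun x => (∏ k, spinAt x (i N k)) * ∏ l, spinAt x (j N l))| ≤ 1 := by
    intro N
    apply abs_cwExp_le_one
    intro x
    rw [abs_mul]
    have h1 : |∏ k, spinAt x (i N k)| ≤ 1 := by
      rw [Finset.abs_prod]
      exact Finset.prod_le_one (fun k _ => abs_nonneg _) (fun k _ => abs_spinAt_le _ _)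
    have h2 : |∏ l, spinAt x (j N l)| ≤ 1 := by
      rw [Finset.abs_prod]
      exact Finset.prod_le_one (fun k _ => abs_nonneg _) (fun k _ => abs_spinAt_le _ _)
    exact mul_le_one₀ h1 (abs_nonneg _) h2
  rcases hrep with ⟨m, hm, hrm⟩ | ⟨m, hm, hrm⟩
  · obtain ⟨K', rfl⟩ : ∃ K', K = K' + 1 :=
      ⟨K - 1, by have := (Finset.mem_Icc.mp hm); omega⟩
    refine squeeze_zero_norm' (a := fun N => ((K' + 1 : ℕ) ^ 2 : ℝ) / N1 N) ?_ ?_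
    · filter_upwards [hN1.eventually_ge_atTop 1, hN2.eventually_ge_atTop 1] with N h1 h2
      have ha : (1 : ℝ) ≤ (N1 N : ℝ) := by exact_mod_cast h1
      have hb : (1 : ℝ) ≤ (N2 N : ℝ) := by exact_mod_cast h2
      have ha0 : (0 : ℝ) < (N1 N : ℝ) := lt_of_lt_of_le one_pos ha
      have hb0 : (0 : ℝ) < (N2 N : ℝ) := lt_of_lt_of_le one_pos hb
      have hw1 : (wcount (Finset.range (N1 N)) (K' + 1) r : ℝ) ≤
          ((K' + 1 : ℕ) ^ 2 : ℝ) * (N1 N : ℝ) ^ K' := by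
        have h := wcount_le_rep (Finset.range (N1 N)) K' r ⟨m, hm, hrm⟩
        rw [Finset.card_range] at h
        exact_mod_cast h
      have hw2 : (wcount (Finset.Ico (N1 N) (N1 N + N2 N)) L s : ℝ) ≤ (N2 N : ℝ) ^ L := by
        have h := wcount_le (Finset.Ico (N1 N) (N1 N + N2 N)) L s
        rw [Nat.card_Ico] at h
        have h2 : N1 N + N2 N - N1 N = N2 N := by omega
        rw [h2] at h
        exact_mod_cast h
      rw [Real.norm_eq_abs, abs_mul, abs_of_nonneg (by positivity)]
      calc 1 / ((N1 N : ℝ) ^ (K' + 1) * (N2 N : ℝ) ^ L) *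
            (wcount (Finset.range (N1 N)) (K' + 1) r : ℝ) *
            (wcount (Finset.Ico (N1 N) (N1 N + N2 N)) L s : ℝ) * |_|
          ≤ 1 / ((N1 N : ℝ) ^ (K' + 1) * (N2 N : ℝ) ^ L) *
            (((K' + 1 : ℕ) ^ 2 : ℝ) * (N1 N : ℝ) ^ K') * ((N2 N : ℝ) ^ L) * 1 := by
            gcongr <;> first | exact hE N | positivity
        _ = ((K' + 1 : ℕ) ^ 2 : ℝ) / N1 N := by
            field_simp
            ring
    · exact (tendsto_const_div_atTop_nhds_zero_nat _).comp hN1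
  · obtain ⟨L', rfl⟩ : ∃ L', L = L' + 1 :=
      ⟨L - 1, by have := (Finset.mem_Icc.mp hm); omega⟩
    refine squeeze_zero_norm' (a := fun N => ((L' + 1 : ℕ) ^ 2 : ℝ) / N2 N) ?_ ?_
    · filter_upwards [hN1.eventually_ge_atTop 1, hN2.eventually_ge_atTop 1] with N h1 h2
      have ha : (1 : ℝ) ≤ (N1 N : ℝ) := by exact_mod_cast h1
      have hb : (1 : ℝ) ≤ (N2 N : ℝ) := by exact_mod_cast h2
      have ha0 : (0 : ℝ) < (N1 N : ℝ) := lt_of_lt_of_le one_pos ha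
      have hb0 : (0 : ℝ) < (N2 N : ℝ) := lt_of_lt_of_le one_pos hb
      have hw1 : (wcount (Finset.range (N1 N)) K r : ℝ) ≤ (N1 N : ℝ) ^ K := by
        have h := wcount_le (Finset.range (N1 N)) K r
        rw [Finset.card_range] at h
        exact_mod_cast h
      have hw2 : (wcount (Finset.Ico (N1 N) (N1 N + N2 N)) (L' + 1) s : ℝ) ≤
          ((L' + 1 : ℕ) ^ 2 : ℝ) * (N2 N : ℝ) ^ L' := by
        have h := wcount_le_rep (Finset.Ico (N1 N) (N1 N + N2 N)) L' s ⟨m, hm, hrm⟩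
        rw [Nat.card_Ico] at h
        have h2 : N1 N + N2 N - N1 N = N2 N := by omega
        rw [h2] at h
        exact_mod_cast h
      rw [Real.norm_eq_abs, abs_mul, abs_of_nonneg (by positivity)]
      calc 1 / ((N1 N : ℝ) ^ K * (N2 N : ℝ) ^ (L' + 1)) *
            (wcount (Finset.range (N1 N)) K r : ℝ) *
            (wcount (Finset.Ico (N1 N) (N1 N + N2 N)) (L' + 1) s : ℝ) * |_|
          ≤ 1 / ((N1 N : ℝ) ^ K * (N2 N : ℝ) ^ (L' + 1)) *
            ((N1 N : ℝ) ^ K) * (((L' + 1 : ℕ) ^ 2 : ℝ) * (N2 N : ℝ) ^ L') * 1 := by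
            gcongr <;> first | exact hE N | positivity
        _ = ((L' + 1 : ℕ) ^ 2 : ℝ) / N2 N := by
            field_simp
            ring
    · exact (tendsto_const_div_atTop_nhds_zero_nat _).comp hN2
end
end

section
/- Fixed points of tanh: For 0 < β ≤ 1 the equation tanh(βx) = x has exactly one real solution, namely x = 0. For β > 1 the equation tanh(βx) = x has exactly three real solutions: 0, m(β) and −m(β), where m(β) > 0. -/
/-!
`tanh` is strictly concave on `[0, ∞)` with `tanh' 0 = 1`, so its secant slope `tanh y / y`
decreases strictly on `(0, ∞)`, from the limit `1` at `0⁺`. With `y = β x`, a positive solution of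
`tanh (β x) = x` is a solution of `tanh y / y = β⁻¹`: there is none when `β ≤ 1`, and exactly one
when `β > 1`, by the intermediate value theorem and strict monotonicity. Since `tanh` is odd,
`x` is a solution iff `-x` is.
-/

open Real Set Filter Topology

namespace Real

theorem hasDerivAt_tanh (x : ℝ) : HasDerivAt tanh (cosh x ^ 2)⁻¹ x := by
  have h := (hasDerivAt_sinh x).div (hasDerivAt_cosh x) (cosh_pos x).ne'
  rw [show sinh / cosh = tanh from funext fun y => (tanh_eq_sinh_div_cosh y).symm] at h
  refine h.congr_deriv ?_
  rw [← sq, ← sq, cosh_sq_sub_sinh_sq, one_div]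

theorem continuous_tanh : Continuous tanh :=
  continuous_iff_continuousAt.2 fun x => (hasDerivAt_tanh x).continuousAt

theorem strictConcaveOn_tanh : StrictConcaveOn ℝ (Ici 0) tanh := by
  refine StrictAntiOn.strictConcaveOn_of_deriv (convex_Ici 0) continuous_tanh.continuousOn ?_
  rw [interior_Ici, funext fun x => (hasDerivAt_tanh x).deriv]
  intro x (hx : 0 < x) y (hy : 0 < y) hxy
  show (cosh y ^ 2)⁻¹ < (cosh x ^ 2)⁻¹
  gcongr
  exact cosh_strictMonoOn (mem_Ici.2 hx.le) (mem_Ici.2 hy.le) hxy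

theorem tanh_lt_self {x : ℝ} (hx : 0 < x) : tanh x < x := by
  have h := strictConcaveOn_tanh.slope_lt_of_hasDerivAt self_mem_Ici hx.le hx (hasDerivAt_tanh 0)
  rwa [slope_def_field, tanh_zero, sub_zero, sub_zero, cosh_zero, one_pow, inv_one,
    div_lt_one hx] at h

theorem strictAntiOn_tanh_div_self : StrictAntiOn (fun x => tanh x / x) (Ioi 0) := by
  intro x (hx : 0 < x) y (hy : 0 < y) hxy
  have h := strictConcaveOn_tanh.secant_strict_mono self_mem_Ici (mem_Ici.2 hx.le)
    (mem_Ici.2 hy.le) hx.ne' hy.ne' hxy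
  simpa only [tanh_zero, sub_zero] using h

theorem tendsto_tanh_div_self : Tendsto (fun x => tanh x / x) (𝓝[>] 0) (𝓝 1) := by
  have h := (hasDerivAt_tanh 0).tendsto_slope_zero_right
  simp only [zero_add, tanh_zero, sub_zero, smul_eq_mul, cosh_zero, one_pow, inv_one] at h
  simpa only [div_eq_inv_mul] using h

end Real

section FixedPoints

variable {β x : ℝ}

theorem tanh_mul_neg_eq_neg_iff : tanh (β * -x) = -x ↔ tanh (β * x) = x := by
  rw [mul_neg, tanh_neg, neg_inj]

theorem tanh_mul_abs_eq_abs (h : tanh (β * x) = x) : tanh (β * |x|) = |x| := by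
  rcases abs_cases x with ⟨hx, -⟩ | ⟨hx, -⟩ <;> rw [hx]
  · exact h
  · exact tanh_mul_neg_eq_neg_iff.2 h

theorem tanh_mul_lt_self (hβ : 0 < β) (hβ1 : β ≤ 1) (hx : 0 < x) : tanh (β * x) < x :=
  calc tanh (β * x) < β * x := tanh_lt_self (mul_pos hβ hx)
    _ ≤ x := mul_le_of_le_one_left hx.le hβ1

theorem tanh_mul_eq_self_iff (hβ : 0 < β) (hx : 0 < x) :
    tanh (β * x) = x ↔ tanh (β * x) / (β * x) = β⁻¹ := by
  rw [div_eq_iff (mul_pos hβ hx).ne', inv_mul_cancel_left₀ hβ.ne']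

theorem eq_of_tanh_mul_eq_self {y : ℝ} (hβ : 0 < β) (hx : 0 < x) (hy : 0 < y)
    (hx_fix : tanh (β * x) = x) (hy_fix : tanh (β * y) = y) : x = y := by
  rw [tanh_mul_eq_self_iff hβ hx] at hx_fix
  rw [tanh_mul_eq_self_iff hβ hy] at hy_fix
  exact mul_left_cancel₀ hβ.ne' <| strictAntiOn_tanh_div_self.injOn (mul_pos hβ hx)
    (mul_pos hβ hy) (hx_fix.trans hy_fix.symm)

theorem exists_pos_tanh_mul_eq_self (hβ : 1 < β) : ∃ m, 0 < m ∧ tanh (β * m) = m := by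
  have hβ0 : 0 < β := one_pos.trans hβ
  obtain ⟨y, hy_gt, hy_pos⟩ : ∃ y, β⁻¹ < tanh y / y ∧ 0 < y :=
    ((tendsto_tanh_div_self.eventually (lt_mem_nhds (inv_lt_one_of_one_lt₀ hβ))).and
      self_mem_nhdsWithin).exists
  have hβ_lt : tanh β / β < β⁻¹ := by
    rw [div_eq_mul_inv]
    exact mul_lt_of_lt_one_left (inv_pos.2 hβ0) (tanh_lt_one β)
  have hcont : ContinuousOn (fun x => tanh x / x) (Ioi 0) :=
    continuous_tanh.continuousOn.div continuousOn_id fun x hx => ne_of_gt hx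
  obtain ⟨z, hz_pos, hz⟩ := isPreconnected_Ioi.intermediate_value (mem_Ioi.2 hβ0) hy_pos hcont
    ⟨hβ_lt.le, hy_gt.le⟩
  refine ⟨β⁻¹ * z, mul_pos (inv_pos.2 hβ0) hz_pos, ?_⟩
  rw [tanh_mul_eq_self_iff hβ0 (mul_pos (inv_pos.2 hβ0) hz_pos), mul_inv_cancel_left₀ hβ0.ne']
  exact hz

end FixedPoints

/-- **Fixed points of `tanh`.**  For `0 < β ≤ 1` the only real solution of
`tanh(βx) = x` is `x = 0`; for `β > 1` there are exactly three real solutions,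
namely `0`, `m(β)` and `−m(β)` with `m(β) > 0`. -/
theorem tanh_fixed_points :
    (∀ β : ℝ, 0 < β → β ≤ 1 → ∀ x : ℝ, Real.tanh (β * x) = x ↔ x = 0) ∧
    (∀ β : ℝ, 1 < β → ∃ m : ℝ, 0 < m ∧
      ∀ x : ℝ, Real.tanh (β * x) = x ↔ x = 0 ∨ x = m ∨ x = -m) := by
  refine ⟨fun β hβ hβ1 x => ⟨fun h => ?_, fun hx => by simp [hx]⟩, fun β hβ => ?_⟩
  · by_contra hx
    exact (tanh_mul_lt_self hβ hβ1 (abs_pos.2 hx)).ne (tanh_mul_abs_eq_abs h)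
  · obtain ⟨m, hm_pos, hm⟩ := exists_pos_tanh_mul_eq_self hβ
    refine ⟨m, hm_pos, fun x => ⟨fun h => ?_, ?_⟩⟩
    · rcases eq_or_ne x 0 with hx | hx
      · exact Or.inl hx
      · have : |x| = m := eq_of_tanh_mul_eq_self (one_pos.trans hβ) (abs_pos.2 hx) hm_pos
          (tanh_mul_abs_eq_abs h) hm
        exact Or.inr (abs_eq hm_pos.le |>.1 this)
    · rintro (rfl | rfl | rfl)
      · simp
      · exact hm
      · exact tanh_mul_neg_eq_neg_iff.2 hm
end
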